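/- Let a, λ, c₀, r₁, r₂, α₃ be complex numbers with λ ≠ 0 and c₀ ≠ 0, and set p = (λ² − a·r₁²)/(i·λ·c₀), q = (λ² + a·r₂²)/(i·λ·c₀). Let M₁ be the 4×4 complex matrix with rows: row 1 = (sin(r₁α₃), cos(r₁α₃), cosh(r₂α₃), sinh(r₂α₃)); row 2 = (r₁cos(r₁α₃), −r₁sin(r₁α₃), r₂sinh(r₂α₃), r₂cosh(r₂α₃)); row 3 = (p·sin(r₁α₃), p·cos(r₁α₃), q·cosh(r₂α₃), q·sinh(r₂α₃)); row 4 = (p·r₁cos(r₁α₃), −p·r₁sin(r₁α₃), q·r₂sinh(r₂α₃), q·r₂cosh(r₂α₃)). Then det(M₁) = r₁·r₂·a²·(r₁² + r₂²)²/(λ²·c₀²). -/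

import Mathlib

open Complex

/-! Subtracting `p` times the `u`-rows from the `y`-rows makes `M₁` block upper triangular, so
`det M₁ = (q - p)² · W(sin, cos) · W(cosh, sinh) = -r₁ r₂ (q - p)²`, the two Wronskians being
`-r₁` and `r₂` by `sin² + cos² = 1` and `cosh² - sinh² = 1`. Finally
`q - p = a (r₁² + r₂²) / (i λ c₀)`. -/

theorem Matrix.det_fromBlocks_smul_smul {R n : Type*} [CommRing R] [Fintype n] [DecidableEq n]
    (A B : Matrix n n R) (p q : R) :
    (fromBlocks A B (p • A) (q • B)).det = (q - p) ^ Fintype.card n * A.det * B.det := by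
  have hfactor : fromBlocks A B (p • A) (q • B) =
      fromBlocks 1 0 (p • 1) 1 * fromBlocks A B 0 ((q - p) • B) := by
    simp [fromBlocks_multiply, sub_smul]
  rw [hfactor, det_mul, det_fromBlocks_zero₁₂, det_fromBlocks_zero₂₁, det_smul]
  simp only [det_one, one_mul]
  ring

theorem Complex.det_sin_cos_wronskian (r θ : ℂ) :
    !![sin θ, cos θ; r * cos θ, -(r * sin θ)].det = -r := by
  rw [Matrix.det_fin_two_of]
  linear_combination (-r) * sin_sq_add_cos_sq θ

theorem Complex.det_cosh_sinh_wronskian (r θ : ℂ) :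
    !![cosh θ, sinh θ; r * sinh θ, r * cosh θ].det = r := by
  rw [Matrix.det_fin_two_of]
  linear_combination r * cosh_sq_sub_sinh_sq θ

open Matrix in
theorem det_coupled_boundary_matrix (r₁ r₂ x y p q : ℂ) :
    !![sin x, cos x, cosh y, sinh y;
       r₁ * cos x, -(r₁ * sin x), r₂ * sinh y, r₂ * cosh y;
       p * sin x, p * cos x, q * cosh y, q * sinh y;
       p * r₁ * cos x, -(p * r₁ * sin x), q * r₂ * sinh y, q * r₂ * cosh y].det
      = -(r₁ * r₂) * (q - p) ^ 2 := by
  set A := !![sin x, cos x; r₁ * cos x, -(r₁ * sin x)]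
  set B := !![cosh y, sinh y; r₂ * sinh y, r₂ * cosh y]
  calc _ = (reindex finSumFinEquiv finSumFinEquiv (fromBlocks A B (p • A) (q • B))).det := by
        congr 1
        ext i j
        fin_cases i <;> fin_cases j <;> simp [A, B, mul_assoc] <;> rfl
    _ = _ := by
      rw [det_reindex_self, det_fromBlocks_smul_smul, det_sin_cos_wronskian,
        det_cosh_sinh_wronskian, Fintype.card_fin]
      ring

theorem stmt5_general (a lam c₀ r₁ r₂ α₃ : ℂ)
    (p q : ℂ)
    (hp : p = (lam ^ 2 - a * r₁ ^ 2) / (Complex.I * lam * c₀))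
    (hq : q = (lam ^ 2 + a * r₂ ^ 2) / (Complex.I * lam * c₀)) :
    Matrix.det
      !![Complex.sin (r₁ * α₃), Complex.cos (r₁ * α₃), Complex.cosh (r₂ * α₃), Complex.sinh (r₂ * α₃);
         r₁ * Complex.cos (r₁ * α₃), -(r₁ * Complex.sin (r₁ * α₃)), r₂ * Complex.sinh (r₂ * α₃), r₂ * Complex.cosh (r₂ * α₃);
         p * Complex.sin (r₁ * α₃), p * Complex.cos (r₁ * α₃), q * Complex.cosh (r₂ * α₃), q * Complex.sinh (r₂ * α₃);
         p * r₁ * Complex.cos (r₁ * α₃), -(p * r₁ * Complex.sin (r₁ * α₃)), q * r₂ * Complex.sinh (r₂ * α₃), q * r₂ * Complex.cosh (r₂ * α₃)]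
      = r₁ * r₂ * a ^ 2 * (r₁ ^ 2 + r₂ ^ 2) ^ 2 / (lam ^ 2 * c₀ ^ 2) := by
  rw [det_coupled_boundary_matrix, hp, hq, ← sub_div, div_pow, mul_pow, mul_pow, I_sq]
  ring

/-- determinant of the boundary-condition matrix M₁ (case λ² < c₀²). -/
theorem stmt5 (a lam c₀ r₁ r₂ α₃ : ℂ) (hlam : lam ≠ 0) (hc : c₀ ≠ 0)
    (p q : ℂ)
    (hp : p = (lam ^ 2 - a * r₁ ^ 2) / (Complex.I * lam * c₀))
    (hq : q = (lam ^ 2 + a * r₂ ^ 2) / (Complex.I * lam * c₀)) :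
    Matrix.det
      !![Complex.sin (r₁ * α₃), Complex.cos (r₁ * α₃), Complex.cosh (r₂ * α₃), Complex.sinh (r₂ * α₃);
         r₁ * Complex.cos (r₁ * α₃), -(r₁ * Complex.sin (r₁ * α₃)), r₂ * Complex.sinh (r₂ * α₃), r₂ * Complex.cosh (r₂ * α₃);
         p * Complex.sin (r₁ * α₃), p * Complex.cos (r₁ * α₃), q * Complex.cosh (r₂ * α₃), q * Complex.sinh (r₂ * α₃);
         p * r₁ * Complex.cos (r₁ * α₃), -(p * r₁ * Complex.sin (r₁ * α₃)), q * r₂ * Complex.sinh (r₂ * α₃), q * r₂ * Complex.cosh (r₂ * α₃)]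
      = r₁ * r₂ * a ^ 2 * (r₁ ^ 2 + r₂ ^ 2) ^ 2 / (lam ^ 2 * c₀ ^ 2) :=
  stmt5_general a lam c₀ r₁ r₂ α₃ p q hp hq
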